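/- The collection I₁ = {X ⊆ ω₁ : there exists a ladder system maximal for X} is a normal ideal on ω₁: it is closed under subsets, and if S_ξ ∈ I₁ for every ξ < ω₁ then the diagonal union ∇_ξ S_ξ = {α < ω₁ : ∃ξ < α, α ∈ S_ξ} belongs to I₁. -/

import Mathlib

open Set

/-- ω₁, the first uncountable ordinal. -/
noncomputable def omegaOne : Ordinal := (Cardinal.aleph 1).ord

/-- ω₂, the second uncountable ordinal. -/
noncomputable def omegaTwo : Ordinal := (Cardinal.aleph 2).ord

/-- The set of countable ordinals, i.e. ω₁ viewed as a set of ordinals. -/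
def omegaOneSet : Set Ordinal := {o | o < omegaOne}

/-- `A ⊆* B` iff `A \ B` is finite. -/
def AlmostSubset (A B : Set Ordinal) : Prop := (A \ B).Finite

/-- `A =* B` iff `A ⊆* B` and `B ⊆* A`. -/
def AlmostEq (A B : Set Ordinal) : Prop := AlmostSubset A B ∧ AlmostSubset B A

/-- A club subset of ω₁: a set of countable ordinals, unbounded in ω₁ and
closed (every nonzero δ < ω₁ which is a limit of members is a member). -/
def IsClubOmegaOne (C : Set Ordinal) : Prop :=
  C ⊆ omegaOneSet ∧
  (∀ a < omegaOne, ∃ b ∈ C, a < b) ∧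
  (∀ δ, δ ≠ 0 → δ < omegaOne → (∀ a < δ, ∃ b ∈ C, a < b ∧ b < δ) → δ ∈ C)

/-- A stationary subset of ω₁: one meeting every club. -/
def Stationary (S : Set Ordinal) : Prop := ∀ C, IsClubOmegaOne C → (S ∩ C).Nonempty

/-- A ladder system: for each δ in the domain (a set of countable limit ordinals),
a strictly increasing ω-sequence cofinal in δ. -/
structure Ladder where
  dom : Set Ordinal
  toFun : Ordinal → ℕ → Ordinal
  dom_lt : ∀ δ ∈ dom, δ < omegaOne
  mono : ∀ δ ∈ dom, StrictMono (toFun δ)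
  lt : ∀ δ ∈ dom, ∀ n, toFun δ n < δ
  cofinal : ∀ δ ∈ dom, ∀ a < δ, ∃ n, a < toFun δ n

/-- `[η_δ]`, the range of the ladder at δ. -/
def Ladder.lad (η : Ladder) (δ : Ordinal) : Set Ordinal := Set.range (η.toFun δ)

/-- The restriction `η̄↾A`, with domain `dom(η̄) ∩ A`. -/
def Ladder.restrict (η : Ladder) (A : Set Ordinal) : Ladder where
  dom := η.dom ∩ A
  toFun := η.toFun
  dom_lt := fun δ h => η.dom_lt δ h.1
  mono := fun δ h => η.mono δ h.1
  lt := fun δ h => η.lt δ h.1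
  cofinal := fun δ h => η.cofinal δ h.1

/-- η̄ is club-guessing iff every club C has some δ ∈ dom(η̄) with `[η_δ] ⊆* C`. -/
def ClubGuessing (η : Ladder) : Prop :=
  ∀ C, IsClubOmegaOne C → ∃ δ ∈ η.dom, AlmostSubset (η.lad δ) C

/-- η̄ is strongly club-guessing iff for every club C there is a club D with
`[η_δ] ⊆* C` for all δ ∈ D ∩ dom(η̄). -/
def StronglyGuessing (η : Ladder) : Prop :=
  ∀ C, IsClubOmegaOne C → ∃ D, IsClubOmegaOne D ∧ ∀ δ ∈ D ∩ η.dom, AlmostSubset (η.lad δ) C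

/-- A club C avoids η̄ iff `[η_δ] ∩ C` is finite for every δ ∈ dom(η̄) outside
some non-stationary set. -/
def Avoids (C : Set Ordinal) (η : Ladder) : Prop :=
  IsClubOmegaOne C ∧ ∃ N : Set Ordinal, ¬ Stationary N ∧
    ∀ δ ∈ η.dom, δ ∉ N → (η.lad δ ∩ C).Finite

/-- η̄ is avoidable iff some club avoids it. -/
def Avoidable (η : Ladder) : Prop := ∃ C, Avoids C η

/-- A set S ⊆ ω₁ is avoidable iff every ladder system over S is avoidable. -/
def AvoidableSet (S : Set Ordinal) : Prop := ∀ η : Ladder, η.dom ⊆ S → Avoidable η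

/-- Two ladders are almost disjoint iff for some club C, `[η_δ] ∩ [μ_δ]` is finite
for every δ ∈ C ∩ dom(η̄) ∩ dom(μ̄). -/
def AlmostDisjoint (η μ : Ladder) : Prop :=
  ∃ C, IsClubOmegaOne C ∧ ∀ δ ∈ C ∩ (η.dom ∩ μ.dom), (η.lad δ ∩ μ.lad δ).Finite

/-- `η̄ ⊴ μ̄` : η̄ is a subladder of μ̄. -/
def Subladder (η μ : Ladder) : Prop :=
  ∃ C, IsClubOmegaOne C ∧ C ∩ η.dom ⊆ μ.dom ∧
    ∀ δ ∈ C ∩ η.dom, AlmostSubset (η.lad δ) (μ.lad δ)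

/-- η̄ is maximal for X iff dom(η̄) ⊆ X, η̄ is strongly club-guessing, and every
ladder system over X almost disjoint from η̄ is avoidable. -/
def MaximalForLadder (η : Ladder) (X : Set Ordinal) : Prop :=
  η.dom ⊆ X ∧ StronglyGuessing η ∧
    ∀ μ : Ladder, μ.dom ⊆ X → AlmostDisjoint μ η → Avoidable μ

/-- The diagonal union `∇_ξ A_ξ = {α < ω₁ : ∃ ξ < α, α ∈ A_ξ}`. -/
def diagUnion (A : Ordinal → Set Ordinal) : Set Ordinal :=
  {α | α < omegaOne ∧ ∃ ξ < α, α ∈ A ξ}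

/-- H is S̄-small iff the set of i < ω₂ with H ∩ S_i stationary has size ≤ ℵ₁. -/
def SSmall (S : Ordinal → Set Ordinal) (H : Set Ordinal) : Prop :=
  Cardinal.mk {i : Ordinal // i < omegaTwo ∧ Stationary (H ∩ S i)} ≤
    Cardinal.lift.{1,0} (Cardinal.aleph 1 : Cardinal.{0})

/-- Conditions A1–A5 for (S̄, η̄), with χ the family of maximal ladders from A3. -/
def CondA (S : Ordinal → Set Ordinal) (η : Ladder) (χ : Ordinal → Ladder) : Prop :=
  (∀ i < omegaTwo, S i ⊆ omegaOneSet ∧ Stationary (S i)) ∧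
  (∀ i < omegaTwo, ∀ j < omegaTwo, i ≠ j → ¬ Stationary (S i ∩ S j)) ∧
  -- A1
  (∀ i < omegaTwo, S i ⊆ η.dom) ∧
  -- A2
  (∀ μ : Ladder, AlmostDisjoint μ η → Avoidable μ) ∧
  -- A3
  (∀ i < omegaTwo, (χ i).dom = S i ∧ MaximalForLadder (χ i) (S i)) ∧
  -- A4
  (∀ X : Set Ordinal, X ⊆ omegaOneSet →
      (∀ i < omegaTwo, ¬ Stationary (X ∩ S i)) → AvoidableSet X) ∧
  -- A5
  (∀ X : Set Ordinal, X ⊆ omegaOneSet → ¬ SSmall S X →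
      ∀ ρ : Ladder, ρ.dom = X → Subladder ρ η →
        ∃ i, i < omegaTwo ∧ S i ⊆ X ∧ Subladder (χ i) ρ)

open Set

lemma omegaOne_isLimit : Order.IsSuccLimit omegaOne := Cardinal.isSuccLimit_ord (Cardinal.aleph0_le_aleph 1)

lemma omegaOne_pos : (0:Ordinal) < omegaOne := omegaOne_isLimit.pos

lemma lt_add_one_self (a : Ordinal) : a < a + 1 := by
  rw [Ordinal.add_one_eq_succ]; exact Order.lt_succ a

lemma succ_lt_omegaOne {a : Ordinal} (h : a < omegaOne) : a + 1 < omegaOne := by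
  rw [Ordinal.add_one_eq_succ]; exact omegaOne_isLimit.succ_lt h

lemma nat_iSup_lt (f : ℕ → Ordinal) (h : ∀ n, f n < omegaOne) : (⨆ n, f n) < omegaOne := by
  apply Ordinal.iSup_lt_ord_lift ?_ h
  rw [omegaOne, Cardinal.isRegular_aleph_one.cof_eq, Cardinal.mk_nat, Cardinal.lift_aleph0]
  exact Cardinal.aleph0_lt_aleph_one

lemma nat_lt_iSup {f : ℕ → Ordinal} {a : Ordinal} (h : a < ⨆ n, f n) : ∃ n, a < f n := by
  by_contra hc; push_neg at hc
  exact h.not_ge (Ordinal.iSup_le hc)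

lemma nat_le_iSup (f : ℕ → Ordinal) (n : ℕ) : f n ≤ ⨆ n, f n := Ordinal.le_iSup f n

lemma exists_enum {α : Ordinal} (hα : α < omegaOne) : ∃ e : ℕ → Ordinal, ∀ ξ < α, ∃ n, e n = ξ := by
  rcases eq_or_ne α 0 with rfl | hne
  · exact ⟨fun _ => 0, fun ξ h => absurd h ((zero_le (a := ξ)).not_gt)⟩
  · have hc : (Set.Iio α).Countable := by
      rw [← Set.countable_coe_iff, ← Cardinal.mk_le_aleph0_iff, Ordinal.mk_Iio_ordinal]
      have h2 : α.card < Cardinal.aleph 1 := (Cardinal.lt_ord).mp hα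
      rw [← Cardinal.succ_aleph0, Order.lt_succ_iff] at h2
      exact Cardinal.lift_le_aleph0.mpr h2
    obtain ⟨e, he⟩ := hc.exists_eq_range ⟨0, pos_iff_ne_zero.mpr hne⟩
    refine ⟨e, fun ξ hξ => ?_⟩
    have : ξ ∈ Set.range e := he ▸ hξ
    obtain ⟨n, hn⟩ := this
    exact ⟨n, hn⟩

/-- The diagonal intersection of a family of clubs. -/
def diagInt (D : Ordinal → Set Ordinal) : Set Ordinal :=
  {δ | δ < omegaOne ∧ 0 < δ ∧ ∀ ξ < δ, δ ∈ D ξ}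

lemma exists_step (D : Ordinal → Set Ordinal) (hD : ∀ ξ < omegaOne, IsClubOmegaOne (D ξ))
    {α : Ordinal} (hα : α < omegaOne) :
    ∃ β, α < β ∧ β < omegaOne ∧ ∀ ξ < α, ∃ b ∈ D ξ, α < b ∧ b ≤ β := by
  obtain ⟨e, he⟩ := exists_enum hα
  have hpick : ∀ n, ∃ b, b < omegaOne ∧ (e n < α → b ∈ D (e n) ∧ α < b) := by
    intro n
    by_cases h : e n < α
    · obtain ⟨b, hb, hab⟩ := (hD (e n) (h.trans hα)).2.1 α hα
      exact ⟨b, (hD (e n) (h.trans hα)).1 hb, fun _ => ⟨hb, hab⟩⟩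
    · exact ⟨0, omegaOne_pos, fun hc => absurd hc h⟩
  choose g hg1 hg2 using hpick
  refine ⟨max (α+1) (⨆ n, g n), lt_max_of_lt_left (lt_add_one_self α),
    max_lt (succ_lt_omegaOne hα) (nat_iSup_lt g hg1), ?_⟩
  intro ξ hξ
  obtain ⟨n, rfl⟩ := he ξ hξ
  obtain ⟨h1, h2⟩ := hg2 n hξ
  exact ⟨g n, h1, h2, (nat_le_iSup g n).trans (le_max_right _ _)⟩

lemma isClub_diagInt (D : Ordinal → Set Ordinal) (hD : ∀ ξ < omegaOne, IsClubOmegaOne (D ξ)) :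
    IsClubOmegaOne (diagInt D) := by
  refine ⟨fun δ hδ => hδ.1, ?_, ?_⟩
  · -- unbounded
    intro a ha
    have hstep : ∀ α, ∃ β, α < omegaOne →
        (α < β ∧ β < omegaOne ∧ ∀ ξ < α, ∃ b ∈ D ξ, α < b ∧ b ≤ β) := by
      intro α
      by_cases h : α < omegaOne
      · obtain ⟨β, hβ⟩ := exists_step D hD h; exact ⟨β, fun _ => hβ⟩
      · exact ⟨0, fun hc => absurd hc h⟩
    choose step hstep using hstep
    let f : ℕ → Ordinal := fun n => Nat.rec (a+1) (fun _ b => step b) n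
    have hf0 : f 0 = a + 1 := rfl
    have hfs : ∀ n, f (n+1) = step (f n) := fun n => rfl
    have hflt : ∀ n, f n < omegaOne := by
      intro n; induction n with
      | zero => exact succ_lt_omegaOne ha
      | succ n ih => rw [hfs]; exact (hstep (f n) ih).2.1
    have hfmono : StrictMono f := by
      apply strictMono_nat_of_lt_succ
      intro n; rw [hfs]; exact (hstep (f n) (hflt n)).1
    have hδlt : (⨆ n, f n) < omegaOne := nat_iSup_lt f hflt
    have hltδ : ∀ n, f n < ⨆ n, f n :=
      fun n => (hfmono (Nat.lt_succ_self n)).trans_le (nat_le_iSup f (n+1))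
    have hpos : 0 < ⨆ n, f n := lt_of_le_of_lt zero_le (hltδ 0)
    refine ⟨⨆ n, f n, ⟨hδlt, hpos, ?_⟩, lt_of_lt_of_le (lt_add_one_self a) ((hf0 ▸ nat_le_iSup f 0))⟩
    intro ξ hξδ
    obtain ⟨m₀, hm₀⟩ := nat_lt_iSup hξδ
    apply (hD ξ (hξδ.trans hδlt)).2.2 _ (ne_of_gt hpos) hδlt
    intro a' ha'
    obtain ⟨m₁, hm₁⟩ := nat_lt_iSup ha'
    have hξm : ξ < f (max m₀ m₁) := hm₀.trans_le (hfmono.monotone (le_max_left _ _))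
    have ham : a' < f (max m₀ m₁) := hm₁.trans_le (hfmono.monotone (le_max_right _ _))
    obtain ⟨b, hbD, hb1, hb2⟩ := (hstep (f (max m₀ m₁)) (hflt _)).2.2 ξ hξm
    refine ⟨b, hbD, ham.trans hb1, lt_of_le_of_lt (hb2.trans ?_) (hltδ (max m₀ m₁ + 1))⟩
    rw [hfs]
  · -- closed
    intro δ hne hδ hlim
    have hpos : 0 < δ := pos_iff_ne_zero.mpr hne
    refine ⟨hδ, hpos, fun ξ hξ => ?_⟩
    apply (hD ξ (hξ.trans hδ)).2.2 δ hne hδ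
    intro a ha
    obtain ⟨b, hbΔ, hab, hbδ⟩ := hlim (max a ξ) (max_lt ha hξ)
    exact ⟨b, hbΔ.2.2 ξ ((le_max_right a ξ).trans_lt hab), (le_max_left a ξ).trans_lt hab, hbδ⟩

lemma isClub_gt {ξ : Ordinal} (hξ : ξ < omegaOne) : IsClubOmegaOne {δ | ξ < δ ∧ δ < omegaOne} := by
  refine ⟨fun δ h => h.2, ?_, ?_⟩
  · intro a ha
    exact ⟨max a ξ + 1, ⟨(le_max_right a ξ).trans_lt (lt_add_one_self _),
      succ_lt_omegaOne (max_lt ha hξ)⟩, (le_max_left a ξ).trans_lt (lt_add_one_self _)⟩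
  · intro δ hne hδ hlim
    obtain ⟨b, hb, _, hbδ⟩ := hlim 0 (pos_iff_ne_zero.mpr hne)
    exact ⟨hb.1.trans hbδ, hδ⟩

lemma exists_club_inter {C D : Set Ordinal} (hC : IsClubOmegaOne C) (hD : IsClubOmegaOne D) :
    ∃ E, IsClubOmegaOne E ∧ E ⊆ C ∩ D := by
  have hF : ∀ ξ < omegaOne, IsClubOmegaOne (if ξ = 0 then C else D) := by
    intro ξ _; by_cases h : ξ = 0 <;> simp [h, hC, hD]
  have hΔ := isClub_diagInt _ hF
  have h1ω : (1:Ordinal) < omegaOne := (by simpa using succ_lt_omegaOne omegaOne_pos)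
  refine ⟨diagInt (fun ξ => if ξ = 0 then C else D) ∩ {δ | 1 < δ}, ⟨?_, ?_, ?_⟩, ?_⟩
  · exact fun δ h => hΔ.1 h.1
  · intro a ha
    obtain ⟨b, hb, hab⟩ := hΔ.2.1 (max a 1) (max_lt ha h1ω)
    exact ⟨b, ⟨hb, (le_max_right a 1).trans_lt hab⟩, (le_max_left a 1).trans_lt hab⟩
  · intro δ hne hδ hlim
    constructor
    · apply hΔ.2.2 δ hne hδ
      intro a ha
      obtain ⟨b, hb, hab⟩ := hlim a ha
      exact ⟨b, hb.1, hab⟩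
    · obtain ⟨b, hb, _, hbδ⟩ := hlim 0 (pos_iff_ne_zero.mpr hne)
      have h1b : (1:Ordinal) < b := hb.2
      exact h1b.trans hbδ
  · rintro δ ⟨⟨_, hpos, hall⟩, h1δ⟩
    constructor
    · have := hall 0 hpos; simpa using this
    · have := hall 1 h1δ; simpa using this

lemma not_stationary_iff {N : Set Ordinal} :
    ¬ Stationary N ↔ ∃ C, IsClubOmegaOne C ∧ N ∩ C = ∅ := by
  constructor
  · intro h
    rw [Stationary] at h; push_neg at h
    obtain ⟨C, hC, hne⟩ := h
    exact ⟨C, hC, hne⟩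
  · rintro ⟨C, hC, hE⟩ hst
    obtain ⟨x, hx⟩ := hst C hC
    rw [hE] at hx
    exact hx

lemma lad_inter_le_finite (μ : Ladder) {δ ξ : Ordinal} (hδ : δ ∈ μ.dom) (hξ : ξ < δ) :
    (μ.lad δ ∩ {β | β ≤ ξ}).Finite := by
  obtain ⟨n₀, hn₀⟩ := μ.cofinal δ hδ ξ hξ
  apply Set.Finite.subset ((Set.finite_Iio n₀).image (μ.toFun δ))
  rintro β ⟨⟨n, rfl⟩, hβ⟩
  refine ⟨n, ?_, rfl⟩
  by_contra h
  rw [Set.mem_Iio, not_lt] at h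
  exact (hn₀.trans_le ((μ.mono δ hδ).monotone h)).not_ge hβ

lemma maximal_subset {X X' : Set Ordinal} (hX' : X' ⊆ X) {η : Ladder} (h : MaximalForLadder η X) :
    MaximalForLadder (η.restrict X') X' := by
  obtain ⟨hdom, hsg, hmax⟩ := h
  refine ⟨fun δ hδ => hδ.2, ?_, ?_⟩
  · intro C hC
    obtain ⟨D, hD, hg⟩ := hsg C hC
    exact ⟨D, hD, fun δ hδ => hg δ ⟨hδ.1, hδ.2.1⟩⟩
  · rintro μ hμ ⟨C, hC, hfin⟩
    apply hmax μ (hμ.trans hX')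
    exact ⟨C, hC, fun δ hδ => hfin δ ⟨hδ.1, hδ.2.1, hδ.2.2, hμ hδ.2.1⟩⟩

/-- A ladder system with empty domain. -/
def emptyLadder : Ladder where
  dom := ∅
  toFun := fun _ _ => 0
  dom_lt := fun δ h => absurd h (Set.notMem_empty δ)
  mono := fun δ h => absurd h (Set.notMem_empty δ)
  lt := fun δ h => absurd h (Set.notMem_empty δ)
  cofinal := fun δ h => absurd h (Set.notMem_empty δ)

open scoped Classical in
/-- The index used to glue a family of ladders into one ladder. -/
noncomputable def glueIdx (χ : Ordinal → Ladder) (δ : Ordinal) : Ordinal :=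
  if h : ∃ ξ < δ, δ ∈ (χ ξ).dom then h.choose else 0

lemma glueIdx_spec {χ : Ordinal → Ladder} {δ : Ordinal} (h : ∃ ξ < δ, δ ∈ (χ ξ).dom) :
    glueIdx χ δ < δ ∧ δ ∈ (χ (glueIdx χ δ)).dom := by
  classical
  rw [glueIdx, dif_pos h]
  exact ⟨h.choose_spec.1, h.choose_spec.2⟩

/-- Glue a family of ladders into a single ladder. -/
noncomputable def glueLadder (χ : Ordinal → Ladder) : Ladder where
  dom := {δ | ∃ ξ < δ, δ ∈ (χ ξ).dom}
  toFun := fun δ => (χ (glueIdx χ δ)).toFun δ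
  dom_lt := fun δ h => (χ _).dom_lt δ (glueIdx_spec h).2
  mono := fun δ h => (χ _).mono δ (glueIdx_spec h).2
  lt := fun δ h => (χ _).lt δ (glueIdx_spec h).2
  cofinal := fun δ h => (χ _).cofinal δ (glueIdx_spec h).2

/-- The collection I₁ of subsets of ω₁ admitting a maximal ladder is a normal
ideal: closed under subsets and under diagonal unions. -/
theorem stmt3 :
    (∀ X : Set Ordinal, X ⊆ omegaOneSet → ∀ X' ⊆ X,
        (∃ η : Ladder, MaximalForLadder η X) → ∃ η : Ladder, MaximalForLadder η X') ∧
    (∀ S : Ordinal → Set Ordinal, (∀ ξ < omegaOne, S ξ ⊆ omegaOneSet) →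
        (∀ ξ < omegaOne, ∃ η : Ladder, MaximalForLadder η (S ξ)) →
        ∃ η : Ladder, MaximalForLadder η (diagUnion S)) := by
  constructor
  · rintro X _ X' hX' ⟨η, hη⟩
    exact ⟨η.restrict X', maximal_subset hX' hη⟩
  · intro S hS1 hS2
    classical
    -- disjointify the family
    set S' : Ordinal → Set Ordinal := fun ξ => S ξ \ {α | ∃ ζ < ξ, α ∈ S ζ} with hS'def
    have hsub : ∀ ξ, S' ξ ⊆ S ξ := fun ξ => Set.diff_subset
    have hdisj : ∀ ξ ζ δ, δ ∈ S' ξ → δ ∈ S' ζ → ξ = ζ := by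
      intro ξ ζ δ h1 h2
      by_contra hne
      rcases lt_or_gt_of_ne hne with h | h
      · exact h2.2 ⟨ξ, h, h1.1⟩
      · exact h1.2 ⟨ζ, h, h2.1⟩
    have hUnion : diagUnion S' = diagUnion S := by
      ext α
      constructor
      · rintro ⟨hα, ξ, hξ, hmem⟩
        exact ⟨hα, ξ, hξ, (hsub ξ) hmem⟩
      · rintro ⟨hα, ξ₀, hξ₀, hmem₀⟩
        refine ⟨hα, ?_⟩
        obtain ⟨m, hm, hmin⟩ := Ordinal.lt_wf.has_min {ξ | ξ < α ∧ α ∈ S ξ} ⟨ξ₀, hξ₀, hmem₀⟩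
        refine ⟨m, hm.1, hm.2, ?_⟩
        rintro ⟨ζ, hζm, hαζ⟩
        exact hmin ζ ⟨hζm.trans hm.1, hαζ⟩ hζm
    -- choose maximal ladders for the disjointified family
    have hchoice : ∀ ξ, ∃ η : Ladder, ξ < omegaOne → MaximalForLadder η (S' ξ) := by
      intro ξ
      by_cases h : ξ < omegaOne
      · obtain ⟨η, hη⟩ := hS2 ξ h
        exact ⟨η.restrict (S' ξ), fun _ => maximal_subset (hsub ξ) hη⟩
      · exact ⟨emptyLadder, fun hc => absurd hc h⟩
    choose χ hχ using hchoice
    have hχdom : ∀ ξ, ξ < omegaOne → (χ ξ).dom ⊆ S' ξ := fun ξ h => (hχ ξ h).1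
    -- glue
    set ν : Ladder := glueLadder χ with hνdef
    have hνdom : ν.dom = {δ | ∃ ξ < δ, δ ∈ (χ ξ).dom} := rfl
    have hνlad : ∀ δ, ν.lad δ = (χ (glueIdx χ δ)).lad δ := fun _ => rfl
    have hξof : ∀ δ ∈ ν.dom, glueIdx χ δ < δ ∧ δ ∈ (χ (glueIdx χ δ)).dom :=
      fun δ hδ => glueIdx_spec hδ
    have hξof_eq : ∀ δ ξ, ξ < δ → δ < omegaOne → δ ∈ (χ ξ).dom →
        δ ∈ ν.dom ∧ glueIdx χ δ = ξ := by
      intro δ ξ hξδ hδω hmem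
      have hdm' : δ ∈ ν.dom := ⟨ξ, hξδ, hmem⟩
      have h2 := hξof δ hdm'
      have e1 : δ ∈ S' (glueIdx χ δ) := hχdom _ ((h2.1).trans hδω) h2.2
      have e2 : δ ∈ S' ξ := hχdom ξ (hξδ.trans hδω) hmem
      exact ⟨hdm', hdisj _ _ _ e1 e2⟩
    rw [← hUnion]
    refine ⟨ν, ?_, ?_, ?_⟩
    · -- dom ⊆ diagUnion S'
      intro δ hδ
      obtain ⟨h1, h2⟩ := hξof δ hδ
      have hδω : δ < omegaOne := (χ (glueIdx χ δ)).dom_lt δ h2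
      exact ⟨hδω, glueIdx χ δ, h1, hχdom _ (h1.trans hδω) h2⟩
    · -- strongly club-guessing
      intro C hC
      have hDf : ∀ ξ, ∃ D, ξ < omegaOne →
          (IsClubOmegaOne D ∧ ∀ δ ∈ D ∩ (χ ξ).dom, AlmostSubset ((χ ξ).lad δ) C) := by
        intro ξ
        by_cases h : ξ < omegaOne
        · obtain ⟨D, hD⟩ := (hχ ξ h).2.1 C hC
          exact ⟨D, fun _ => hD⟩
        · exact ⟨∅, fun hc => absurd hc h⟩
      choose Df hDf using hDf
      refine ⟨diagInt Df, isClub_diagInt Df (fun ξ hξ => (hDf ξ hξ).1), ?_⟩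
      rintro δ ⟨hδD, hδdm⟩
      obtain ⟨h1, h2⟩ := hξof δ hδdm
      have hξω : glueIdx χ δ < omegaOne := h1.trans hδD.1
      rw [hνlad]
      exact (hDf _ hξω).2 δ ⟨hδD.2.2 _ h1, h2⟩
    · -- maximality
      rintro μ hμdom ⟨C₀, hC₀, hADfin⟩
      have key : ∀ ξ, ∃ EN : Set Ordinal × Set Ordinal, ξ < omegaOne →
          (IsClubOmegaOne EN.1 ∧ ¬ Stationary EN.2 ∧
           ∀ δ ∈ μ.dom ∩ S' ξ, δ ∉ EN.2 → (μ.lad δ ∩ EN.1).Finite) := by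
        intro ξ
        by_cases hξ : ξ < omegaOne
        swap
        · exact ⟨(∅, ∅), fun hc => absurd hc hξ⟩
        obtain ⟨E0, hE0club, hE0sub⟩ := exists_club_inter hC₀ (isClub_gt hξ)
        have hAD : AlmostDisjoint (μ.restrict (S' ξ)) (χ ξ) := by
          refine ⟨E0, hE0club, ?_⟩
          rintro δ ⟨hδE, ⟨hδμ, hδS'⟩, hδχ⟩
          have hδω : δ < omegaOne := (χ ξ).dom_lt δ hδχ
          have hξδ : ξ < δ := (hE0sub hδE).2.1
          obtain ⟨hdm', heq⟩ := hξof_eq δ ξ hξδ hδω hδχ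
          have hthis := hADfin δ ⟨(hE0sub hδE).1, hδμ, hdm'⟩
          rw [hνlad δ, heq] at hthis
          exact hthis
        obtain ⟨E, hE, N, hN, hfin⟩ := (hχ ξ hξ).2.2 (μ.restrict (S' ξ)) (fun δ hδ => hδ.2) hAD
        exact ⟨(E, N), fun _ => ⟨hE, hN, fun δ hδ h => hfin δ hδ h⟩⟩
      choose EN hEN using key
      have hCc : IsClubOmegaOne (diagInt (fun ξ => (EN ξ).1)) :=
        isClub_diagInt _ (fun ξ hξ => (hEN ξ hξ).1)
      have hNns : ¬ Stationary {δ | δ < omegaOne ∧ ∃ ξ < δ, δ ∈ (EN ξ).2 ∧ δ ∈ S' ξ} := by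
        have hGf : ∀ ξ, ∃ G, ξ < omegaOne → (IsClubOmegaOne G ∧ (EN ξ).2 ∩ G = ∅) := by
          intro ξ
          by_cases hξ : ξ < omegaOne
          · obtain ⟨G, hG, hGe⟩ := not_stationary_iff.mp (hEN ξ hξ).2.1
            exact ⟨G, fun _ => ⟨hG, hGe⟩⟩
          · exact ⟨∅, fun hc => absurd hc hξ⟩
        choose Gf hGf using hGf
        apply not_stationary_iff.mpr
        refine ⟨diagInt Gf, isClub_diagInt _ (fun ξ hξ => (hGf ξ hξ).1), ?_⟩
        rw [Set.eq_empty_iff_forall_notMem]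
        rintro δ ⟨⟨hδω, ξ, hξδ, hδN, _⟩, hδG⟩
        have hmem : δ ∈ (EN ξ).2 ∩ Gf ξ := ⟨hδN, hδG.2.2 ξ hξδ⟩
        rw [(hGf ξ (hξδ.trans hδω)).2] at hmem
        exact hmem
      refine ⟨diagInt (fun ξ => (EN ξ).1), hCc, _, hNns, ?_⟩
      intro δ hδμ hδN
      obtain ⟨hδω, ξ, hξδ, hδS'⟩ := hμdom hδμ
      have hξω : ξ < omegaOne := hξδ.trans hδω
      have hδNf : δ ∉ (EN ξ).2 := fun h => hδN ⟨hδω, ξ, hξδ, h, hδS'⟩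
      have hfin1 : (μ.lad δ ∩ (EN ξ).1).Finite := (hEN ξ hξω).2.2 δ ⟨hδμ, hδS'⟩ hδNf
      have hfin2 := lad_inter_le_finite μ hδμ hξδ
      apply (hfin1.union hfin2).subset
      rintro β ⟨hβμ, hβC⟩
      rcases le_or_gt β ξ with h | h
      · exact Or.inr ⟨hβμ, h⟩
      · exact Or.inl ⟨hβμ, hβC.2.2 ξ h⟩
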